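/- Let e be a Hermite–Biehler function and assume the de Branges space B(e) contains a nonzero element. Then there is at most one β ∈ [0, π) such that the function s_β belongs to B(e); that is, if β, γ ∈ [0, π), s_β ∈ B(e) and s_γ ∈ B(e), then β = γ. -/

import Mathlib

open MeasureTheory Complex

noncomputable section

/-- `f#(z) := conj (f (conj z))`. -/
def fsharp (f : ℂ → ℂ) : ℂ → ℂ := fun z => (starRingEnd ℂ) (f ((starRingEnd ℂ) z))

/-- Hermite–Biehler function: entire with `|e(conj z)| < |e z|` on the upper half-plane. -/
def IsHB (e : ℂ → ℂ) : Prop :=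
  Differentiable ℂ e ∧
  ∀ z : ℂ, 0 < z.im → ‖e ((starRingEnd ℂ) z)‖ < ‖e z‖

/-- Membership in the de Branges space `B(e)`. -/
def MemDB (e f : ℂ → ℂ) : Prop :=
  Differentiable ℂ f ∧
  Integrable (fun x : ℝ => ‖f x / e x‖ ^ 2) ∧
  ∃ c : ℝ, 0 ≤ c ∧ ∀ z : ℂ, 0 < z.im →
    ‖f z / e z‖ ≤ c / Real.sqrt z.im ∧
    ‖fsharp f z / e z‖ ≤ c / Real.sqrt z.im

/-- Squared norm in `B(e)`: `∫ |f(x)|² |e(x)|⁻² dx`. -/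
def dBnormSq (e f : ℂ → ℂ) : ℝ :=
  ∫ x : ℝ, ‖f x‖ ^ 2 / ‖e x‖ ^ 2

/-- Inner product in `B(e)`: `∫ conj (f x) * g x * |e x|⁻² dx`. -/
def dBinner (e f g : ℂ → ℂ) : ℂ :=
  ∫ x : ℝ, (starRingEnd ℂ) (f x) * g x / (((‖e x‖ : ℝ) : ℂ)) ^ 2

/-- The reproducing kernel of `B(e)`. -/
def dBkernel (e : ℂ → ℂ) (z w : ℂ) : ℂ :=
  if z = (starRingEnd ℂ) w then
    (deriv (fsharp e) z * e z - deriv e z * fsharp e z) / (2 * Real.pi * Complex.I)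
  else
    (fsharp e z * e ((starRingEnd ℂ) w) - e z * fsharp e ((starRingEnd ℂ) w)) /
      (2 * Real.pi * Complex.I * (z - (starRingEnd ℂ) w))

/-- `s_β(z) := (i/2) (e^{iβ} e(z) − e^{−iβ} e#(z))`. -/
def sfun (e : ℂ → ℂ) (β : ℝ) (z : ℂ) : ℂ :=
  Complex.I / 2 *
    (Complex.exp (Complex.I * β) * e z - Complex.exp (-(Complex.I * β)) * fsharp e z)

end

/-!
The combination `e^{-iβ} s_γ - e^{-iγ} s_β` eliminates `e#` and equals `sin (β - γ) · e`.
If both `s_β` and `s_γ` lie in `B(e)`, dividing by `e` (which has no zeros in the upper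
half-plane) gives `|sin (β - γ)| ≤ C / √y` at `z = i y` for every `y > 0`, so
`sin (β - γ) = 0`, which forces `β = γ` on `[0, π)`.
-/

open Filter Topology

theorem IsHB.ne_zero {e : ℂ → ℂ} (he : IsHB e) {z : ℂ} (hz : 0 < z.im) : e z ≠ 0 :=
  norm_pos_iff.mp ((norm_nonneg _).trans_lt (he.2 z hz))

theorem MemDB.exists_norm_div_le {e f : ℂ → ℂ} (hf : MemDB e f) :
    ∃ c : ℝ, ∀ z : ℂ, 0 < z.im → ‖f z / e z‖ ≤ c / Real.sqrt z.im := by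
  obtain ⟨-, -, c, -, hc⟩ := hf
  exact ⟨c, fun z hz => (hc z hz).1⟩

theorem sin_sub_mul_eq_sfun (e : ℂ → ℂ) (β γ : ℝ) (z : ℂ) :
    (Real.sin (β - γ) : ℂ) * e z =
      exp (-(I * β)) * sfun e γ z - exp (-(I * γ)) * sfun e β z := by
  have hexp_neg : exp (-((β - γ : ℂ)) * I) = exp (-(I * β)) * exp (I * γ) := by
    rw [← exp_add]; ring_nf
  have hexp : exp ((β - γ : ℂ) * I) = exp (I * β) * exp (-(I * γ)) := by
    rw [← exp_add]; ring_nf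
  rw [Complex.ofReal_sin, Complex.ofReal_sub, Complex.sin, hexp_neg, hexp]
  simp only [sfun]
  ring

theorem abs_sin_sub_le_norm_sfun_div (e : ℂ → ℂ) (β γ : ℝ) {z : ℂ} (hz : e z ≠ 0) :
    |Real.sin (β - γ)| ≤ ‖sfun e γ z / e z‖ + ‖sfun e β z / e z‖ := by
  have hsin : (Real.sin (β - γ) : ℂ) =
      exp (-(I * β)) * (sfun e γ z / e z) - exp (-(I * γ)) * (sfun e β z / e z) := by
    rw [mul_div_assoc', mul_div_assoc', ← sub_div, ← sin_sub_mul_eq_sfun,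
      mul_div_cancel_right₀ _ hz]
  calc |Real.sin (β - γ)| = ‖(Real.sin (β - γ) : ℂ)‖ := (Complex.norm_real _).symm
    _ ≤ ‖exp (-(I * β)) * (sfun e γ z / e z)‖ + ‖exp (-(I * γ)) * (sfun e β z / e z)‖ := by
      rw [hsin]; exact norm_sub_le _ _
    _ = ‖sfun e γ z / e z‖ + ‖sfun e β z / e z‖ := by
      simp [norm_exp]

theorem nonpos_of_forall_le_div_sqrt {a C : ℝ} (h : ∀ y : ℝ, 0 < y → a ≤ C / Real.sqrt y) :
    a ≤ 0 := by
  have hlim : Tendsto (fun y => C / Real.sqrt y) atTop (𝓝 0) :=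
    tendsto_const_nhds.div_atTop Real.tendsto_sqrt_atTop
  exact ge_of_tendsto hlim (eventually_gt_atTop 0 |>.mono h)

theorem IsHB.sin_sub_eq_zero_of_memDB_sfun {e : ℂ → ℂ} (he : IsHB e) {β γ : ℝ}
    (hβ : MemDB e (sfun e β)) (hγ : MemDB e (sfun e γ)) : Real.sin (β - γ) = 0 := by
  obtain ⟨c₁, hc₁⟩ := hβ.exists_norm_div_le
  obtain ⟨c₂, hc₂⟩ := hγ.exists_norm_div_le
  suffices |Real.sin (β - γ)| ≤ 0 from abs_nonpos_iff.mp this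
  refine nonpos_of_forall_le_div_sqrt (C := c₂ + c₁) fun y hy => ?_
  have him : (I * y).im = y := by simp
  rw [← him] at hy ⊢
  calc |Real.sin (β - γ)| ≤ ‖sfun e γ (I * y) / e (I * y)‖ + ‖sfun e β (I * y) / e (I * y)‖ :=
        abs_sin_sub_le_norm_sfun_div e β γ (he.ne_zero hy)
    _ ≤ c₂ / Real.sqrt (I * y).im + c₁ / Real.sqrt (I * y).im :=
        add_le_add (hc₂ _ hy) (hc₁ _ hy)
    _ = (c₂ + c₁) / Real.sqrt (I * y).im := by ring

theorem statement6_general (e : ℂ → ℂ) (he : IsHB e)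
    (β γ : ℝ) (hβ : β ∈ Set.Ico 0 Real.pi) (hγ : γ ∈ Set.Ico 0 Real.pi)
    (hsβ : MemDB e (sfun e β)) (hsγ : MemDB e (sfun e γ)) : β = γ := by
  have hsin := he.sin_sub_eq_zero_of_memDB_sfun hsβ hsγ
  rw [Real.sin_eq_zero_iff_of_lt_of_lt (by linarith [hβ.1, hγ.2]) (by linarith [hβ.2, hγ.1])]
    at hsin
  linarith

/-- If `B(e)` contains a nonzero element, at most one of the functions
`s_β`, `β ∈ [0, π)`, belongs to `B(e)`. -/
theorem statement6 (e : ℂ → ℂ) (he : IsHB e)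
    (hne : ∃ f : ℂ → ℂ, MemDB e f ∧ f ≠ 0)
    (β γ : ℝ) (hβ : β ∈ Set.Ico 0 Real.pi) (hγ : γ ∈ Set.Ico 0 Real.pi)
    (hsβ : MemDB e (sfun e β)) (hsγ : MemDB e (sfun e γ)) : β = γ :=
  statement6_general e he β γ hβ hγ hsβ hsγ
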